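/- Let k ≥ 0 and u₁, u₂, z₀, z₁, m ∈ ℝ³ with |u₁| ≤ 1. If 2u₁ + k (u₁ × z₀) = 2m and 2u₂ + k (u₂ × z₁) = 2m, then |u₂ − u₁| ≤ (k/2) |z₁ − z₀|. -/

import Mathlib

open scoped InnerProductSpace

/-- The cross product on `ℝ³`, realized as `EuclideanSpace ℝ (Fin 3)`. -/
noncomputable def cross3 (a b : EuclideanSpace ℝ (Fin 3)) : EuclideanSpace ℝ (Fin 3) :=
  (WithLp.equiv 2 (Fin 3 → ℝ)).symm
    (crossProduct ((WithLp.equiv 2 (Fin 3 → ℝ)) a) ((WithLp.equiv 2 (Fin 3 → ℝ)) b))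

lemma cross3_apply (a b : EuclideanSpace ℝ (Fin 3)) :
    cross3 a b = ![a 1 * b 2 - a 2 * b 1, a 2 * b 0 - a 0 * b 2, a 0 * b 1 - a 1 * b 0] := by
  ext i
  fin_cases i <;>
    simp [cross3, crossProduct, WithLp.equiv_symm_apply, WithLp.equiv_apply, PiLp.toLp_apply]

lemma inner3 (x y : EuclideanSpace ℝ (Fin 3)) :
    ⟪x, y⟫_ℝ = x 0 * y 0 + x 1 * y 1 + x 2 * y 2 := by
  simp [PiLp.inner_apply, Fin.sum_univ_three, mul_comm]

lemma inner_cross3_self (d z : EuclideanSpace ℝ (Fin 3)) : ⟪d, cross3 d z⟫_ℝ = 0 := by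
  rw [inner3, cross3_apply]
  simp; ring

lemma norm_cross3_le (a b : EuclideanSpace ℝ (Fin 3)) : ‖cross3 a b‖ ≤ ‖a‖ * ‖b‖ := by
  have e1 : ‖cross3 a b‖ ^ 2 = (a 1 * b 2 - a 2 * b 1) ^ 2 + (a 2 * b 0 - a 0 * b 2) ^ 2
      + (a 0 * b 1 - a 1 * b 0) ^ 2 := by
    rw [← real_inner_self_eq_norm_sq, inner3, cross3_apply]; simp; ring
  have e2 : ‖a‖ ^ 2 = a 0 ^ 2 + a 1 ^ 2 + a 2 ^ 2 := by
    rw [← real_inner_self_eq_norm_sq, inner3]; ring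
  have e3 : ‖b‖ ^ 2 = b 0 ^ 2 + b 1 ^ 2 + b 2 ^ 2 := by
    rw [← real_inner_self_eq_norm_sq, inner3]; ring
  have h2 : ‖cross3 a b‖ ^ 2 ≤ (‖a‖ * ‖b‖) ^ 2 := by
    rw [e1, mul_pow, e2, e3]
    nlinarith [sq_nonneg (a 0 * b 0 + a 1 * b 1 + a 2 * b 2)]
  exact (pow_le_pow_iff_left₀ (norm_nonneg _) (by positivity) two_ne_zero).mp h2

lemma cross3_sub_sub (u₁ u₂ z₀ z₁ : EuclideanSpace ℝ (Fin 3)) :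
    cross3 u₂ z₁ - cross3 u₁ z₀ = cross3 (u₂ - u₁) z₁ + cross3 u₁ (z₁ - z₀) := by
  ext i
  have h1 := cross3_apply u₂ z₁
  have h2 := cross3_apply u₁ z₀
  have h3 := cross3_apply (u₂ - u₁) z₁
  have h4 := cross3_apply u₁ (z₁ - z₀)
  fin_cases i <;>
    simp [h1, h2, h3, h4, PiLp.sub_apply, PiLp.add_apply] <;> ring

/-- Lipschitz estimate for consecutive fixed-point iterates of the linearized angular
momentum method: if `k ≥ 0`, `|u₁| ≤ 1`, `2u₁ + k (u₁ × z₀) = 2m`, and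
`2u₂ + k (u₂ × z₁) = 2m`, then `|u₂ − u₁| ≤ (k/2)|z₁ − z₀|`. -/
theorem linearized_step_contraction_estimate
    (k : ℝ) (hk : 0 ≤ k)
    (u₁ u₂ z₀ z₁ m : EuclideanSpace ℝ (Fin 3))
    (hu₁ : ‖u₁‖ ≤ 1)
    (heq₁ : (2 : ℝ) • u₁ + k • cross3 u₁ z₀ = (2 : ℝ) • m)
    (heq₂ : (2 : ℝ) • u₂ + k • cross3 u₂ z₁ = (2 : ℝ) • m) :
    ‖u₂ - u₁‖ ≤ k / 2 * ‖z₁ - z₀‖ := by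
  set d := u₂ - u₁ with hd
  set w := z₁ - z₀ with hw
  have hc := cross3_sub_sub u₁ u₂ z₀ z₁
  have hkey : (2 : ℝ) • d = -(k • cross3 d z₁) - k • cross3 u₁ w := by
    have h2 : (2 : ℝ) • (u₂ - u₁) + k • (cross3 (u₂ - u₁) z₁ + cross3 u₁ (z₁ - z₀)) = 0 := by
      rw [← hc]
      have : (2 : ℝ) • (u₂ - u₁) + k • (cross3 u₂ z₁ - cross3 u₁ z₀)
          = ((2 : ℝ) • u₂ + k • cross3 u₂ z₁) - ((2 : ℝ) • u₁ + k • cross3 u₁ z₀) := by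
        module
      rw [this, heq₁, heq₂, sub_self]
    rw [hd, hw]
    linear_combination (norm := module) h2
  have hinner : 2 * ‖d‖ ^ 2 = -(k * ⟪d, cross3 u₁ w⟫_ℝ) := by
    have : ⟪d, (2 : ℝ) • d⟫_ℝ = ⟪d, -(k • cross3 d z₁) - k • cross3 u₁ w⟫_ℝ := by
      rw [hkey]
    rw [inner_smul_right, real_inner_self_eq_norm_sq, inner_sub_right, inner_neg_right,
      inner_smul_right, inner_smul_right, inner_cross3_self] at this
    linarith [this]
  have hbound : 2 * ‖d‖ ^ 2 ≤ k * (‖d‖ * ‖w‖) := by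
    have h1 : -⟪d, cross3 u₁ w⟫_ℝ ≤ ‖d‖ * ‖cross3 u₁ w‖ := by
      have := abs_real_inner_le_norm d (cross3 u₁ w)
      nlinarith [neg_abs_le (⟪d, cross3 u₁ w⟫_ℝ)]
    have h2 : ‖cross3 u₁ w‖ ≤ ‖w‖ := by
      have := norm_cross3_le u₁ w
      nlinarith [norm_nonneg w]
    calc 2 * ‖d‖ ^ 2 = k * -⟪d, cross3 u₁ w⟫_ℝ := by rw [hinner]; ring
      _ ≤ k * (‖d‖ * ‖cross3 u₁ w‖) := mul_le_mul_of_nonneg_left h1 hk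
      _ ≤ k * (‖d‖ * ‖w‖) := by
          exact mul_le_mul_of_nonneg_left (mul_le_mul_of_nonneg_left h2 (norm_nonneg d)) hk
  rcases eq_or_lt_of_le (norm_nonneg d) with h0 | h0
  · rw [← h0]; positivity
  · nlinarith [norm_nonneg w]
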